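/- arXiv:1006.1019 — 13 statements merged into one kernel-verified Lean document; each statement's English description precedes it below -/
import Mathlib

section
/- Suppose there exists a price p° > 0 with S = D(p°). Then p° maximizes the search engine's expected revenue: for every price p > 0, R(p) ≤ R(p°) = p°·S (i.e., expected revenue is maximized when expected demand equals supply). -/
/-- Ex ante monopoly: if there is a price `p0 > 0` at which expected demand equals
supply, then `p0` maximizes the expected revenue, and `R p0 = p0 * S`. -/
theorem stmt_0 (m : ℕ) (hm : 1 ≤ m) (β S : ℝ) (hβ : 0 < β) (hS : 0 < S)
    (F : ℝ → ℝ) (hF01 : ∀ p : ℝ, 0 < p → F p ∈ Set.Icc (0 : ℝ) 1)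
    (hFmono : ∀ p q : ℝ, 0 < p → p ≤ q → F p ≤ F q)
    (D R : ℝ → ℝ)
    (hD : ∀ p : ℝ, 0 < p → D p = (m : ℝ) * β * (1 - F p) / p)
    (hR : ∀ p : ℝ, 0 < p → R p = min (p * S) ((m : ℝ) * β * (1 - F p)))
    (p0 : ℝ) (hp0 : 0 < p0) (hclear : S = D p0) :
    R p0 = p0 * S ∧ ∀ p : ℝ, 0 < p → R p ≤ R p0 := by
  have key : p0 * S = (m : ℝ) * β * (1 - F p0) := by
    rw [hclear, hD p0 hp0]
    field_simp
  have hR0 : R p0 = p0 * S := by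
    rw [hR p0 hp0, ← key, min_self]
  refine ⟨hR0, fun p hp => ?_⟩
  rw [hR p hp, hR0]
  rcases le_total p p0 with h | h
  · exact le_trans (min_le_left _ _)
      (mul_le_mul_of_nonneg_right h hS.le)
  · refine le_trans (min_le_right _ _) ?_
    rw [key]
    have := hFmono p0 p hp0 h
    have hmβ : (0:ℝ) ≤ (m : ℝ) * β := by positivity
    nlinarith
end

section
/- For every finite nonempty advertiser set I (with values v_i > 0 and budgets B_i > 0) and every supply S > 0, a market-clearing price exists: there exist p > 0 and coefficients α_i ∈ [0,1] (i ∈ I) with α_i = 1 whenever v_i > p and α_i = 0 whenever v_i < p, such that S = Σ_{i∈I} α_i B_i / p. -/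
/-!
At price `p` the advertisers with `v i > p` spend their whole budget and those with `v i = p`
any part of it, so `p` clears the market as soon as `S * p` lies between the budget of the
bidders strictly above `p` and that of the bidders at least at `p`. Let `w ≥ 0` be the largest
among `0` and the values at which the budget strictly above `w` exceeds `S * w`, and put
`p = budgetAbove w / S > w`. The least of `p` and the values above `w` then satisfies both
inequalities: the upper one because no value lies strictly between `w` and it, the lower one
either trivially (if it is `p`) or by maximality of `w` (if it is a value).
-/

open Finset

/-- `p` is a market-clearing (optimal) price for advertiser set `I` with values `v`,
budgets `B` and supply `S`: there are coefficients `α i ∈ [0,1]`, equal to `1` when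
`v i > p` and to `0` when `v i < p`, such that `S = ∑ i ∈ I, α i * B i / p`. -/
def IsClearingPrice {ι : Type*} (I : Finset ι) (v B : ι → ℝ) (S p : ℝ) : Prop :=
  0 < p ∧ ∃ α : ι → ℝ, (∀ i ∈ I, 0 ≤ α i ∧ α i ≤ 1) ∧
    (∀ i ∈ I, p < v i → α i = 1) ∧ (∀ i ∈ I, v i < p → α i = 0) ∧
    S = ∑ i ∈ I, α i * B i / p

theorem exists_mem_Icc_mul_eq {x E : ℝ} (hx : 0 ≤ x) (hxE : x ≤ E) :
    ∃ c ∈ Set.Icc (0 : ℝ) 1, c * E = x := by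
  rcases hx.eq_or_lt with rfl | hx
  · exact ⟨0, by simp, zero_mul E⟩
  · have hE : 0 < E := hx.trans_le hxE
    exact ⟨x / E, ⟨by positivity, (div_le_one hE).2 hxE⟩, div_mul_cancel₀ x hE.ne'⟩

section Budgets

variable {ι : Type*} (I : Finset ι) (v B : ι → ℝ)

noncomputable def budgetAbove (p : ℝ) : ℝ := ∑ i ∈ I with p < v i, B i

noncomputable def budgetAtLeast (p : ℝ) : ℝ := ∑ i ∈ I with p ≤ v i, B i

variable {I v B}

theorem budgetAbove_le_budgetAtLeast (hB : ∀ i ∈ I, 0 ≤ B i) (p : ℝ) :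
    budgetAbove I v B p ≤ budgetAtLeast I v B p :=
  sum_le_sum_of_subset_of_nonneg (monotone_filter_right I fun _ _ => le_of_lt)
    fun i hi _ => hB i (mem_filter.1 hi).1

theorem budgetAtLeast_eq_budgetAbove_add (p : ℝ) :
    budgetAtLeast I v B p = budgetAbove I v B p + ∑ i ∈ I with v i = p, B i := by
  simp only [budgetAtLeast, budgetAbove, sum_filter, ← sum_add_distrib]
  refine sum_congr rfl fun i _ => ?_
  rcases lt_trichotomy p (v i) with h | h | h
  · simp [h.le, h, h.ne']
  · simp [h]
  · simp [h.not_ge, h.not_gt, h.ne]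

theorem budgetAtLeast_eq_budgetAbove {w q : ℝ} (hwq : w < q)
    (h : ∀ i ∈ I, w < v i → q ≤ v i) : budgetAtLeast I v B q = budgetAbove I v B w :=
  sum_congr (filter_congr fun i hi => ⟨fun hq => hwq.trans_le hq, h i hi⟩) fun _ _ => rfl

theorem IsClearingPrice.of_budget_bounds {S p : ℝ} (hp : 0 < p)
    (hAbove : budgetAbove I v B p ≤ S * p) (hAtLeast : S * p ≤ budgetAtLeast I v B p) :
    IsClearingPrice I v B S p := by
  rw [budgetAtLeast_eq_budgetAbove_add] at hAtLeast
  obtain ⟨c, ⟨hc0, hc1⟩, hc⟩ :=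
    exists_mem_Icc_mul_eq (sub_nonneg.2 hAbove) (sub_le_iff_le_add'.2 hAtLeast)
  have hspend : ∑ i ∈ I, (if p < v i then 1 else if v i = p then c else 0) * B i
      = budgetAbove I v B p + c * ∑ i ∈ I with v i = p, B i := by
    simp only [budgetAbove, sum_filter, mul_sum, ← sum_add_distrib]
    refine sum_congr rfl fun i _ => ?_
    rcases lt_trichotomy p (v i) with h | h | h
    · simp [h, h.ne']
    · simp [h]
    · simp [h.not_gt, h.ne]
  refine ⟨hp, fun i => if p < v i then 1 else if v i = p then c else 0, ?_, ?_, ?_, ?_⟩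
  · intro i _
    dsimp only
    split_ifs <;> simp [hc0, hc1]
  · intro i _ h
    simp [h]
  · intro i _ h
    simp [h.not_gt, h.ne]
  · rw [← sum_div, hspend, hc, add_sub_cancel, mul_div_cancel_right₀ S hp.ne']

theorem exists_budget_bounds_gt (hB : ∀ i ∈ I, 0 ≤ B i) {S w : ℝ} (hS : 0 < S)
    (hw : S * w < budgetAbove I v B w)
    (hmax : ∀ i ∈ I, w < v i → budgetAbove I v B (v i) ≤ S * v i) :
    ∃ q, w < q ∧ budgetAbove I v B q ≤ S * q ∧ S * q ≤ budgetAtLeast I v B q := by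
  set p := budgetAbove I v B w / S
  have hSp : S * p = budgetAbove I v B w := mul_div_cancel₀ _ hS.ne'
  have hwp : w < p := (lt_div_iff₀' hS).2 hw
  set Q := insert p ((I.filter (w < v ·)).image v)
  obtain ⟨q, hqQ, hq_min⟩ := Q.exists_min_image id (insert_nonempty _ _)
  have hqp : q ≤ p := hq_min p (mem_insert_self _ _)
  have hwq : w < q := by
    rcases mem_insert.1 hqQ with rfl | hq
    · exact hwp
    · obtain ⟨i, hi, rfl⟩ := mem_image.1 hq
      exact (mem_filter.1 hi).2
  have hAtLeast : budgetAtLeast I v B q = budgetAbove I v B w :=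
    budgetAtLeast_eq_budgetAbove hwq fun i hi h =>
      hq_min _ (mem_insert_of_mem (mem_image_of_mem _ (mem_filter.2 ⟨hi, h⟩)))
  refine ⟨q, hwq, ?_, ?_⟩
  · rcases mem_insert.1 hqQ with hq | hq
    · calc budgetAbove I v B q ≤ budgetAtLeast I v B q := budgetAbove_le_budgetAtLeast hB q
        _ = S * q := by rw [hAtLeast, ← hSp, hq]
    · obtain ⟨i, hi, rfl⟩ := mem_image.1 hq
      exact hmax i (mem_filter.1 hi).1 (mem_filter.1 hi).2
  · rw [hAtLeast, ← hSp]
    gcongr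

theorem exists_budget_bounds (hI : I.Nonempty) (hv : ∀ i ∈ I, 0 < v i)
    (hB : ∀ i ∈ I, 0 < B i) {S : ℝ} (hS : 0 < S) :
    ∃ p, 0 < p ∧ budgetAbove I v B p ≤ S * p ∧ S * p ≤ budgetAtLeast I v B p := by
  set K := (insert 0 (I.image v)).filter fun x => S * x < budgetAbove I v B x
  have h0K : 0 ∈ K := by
    obtain ⟨i, hi⟩ := hI
    refine mem_filter.2 ⟨mem_insert_self _ _, ?_⟩
    rw [mul_zero]
    exact sum_pos (fun j hj => hB j (mem_filter.1 hj).1) ⟨i, mem_filter.2 ⟨hi, hv i hi⟩⟩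
  obtain ⟨w, hwK, hw_max⟩ := K.exists_max_image id ⟨0, h0K⟩
  have hmax : ∀ i ∈ I, w < v i → budgetAbove I v B (v i) ≤ S * v i := fun i hi hwi => by
    by_contra! h
    exact (hw_max _ (mem_filter.2 ⟨mem_insert_of_mem (mem_image_of_mem v hi), h⟩)).not_gt hwi
  obtain ⟨q, hwq, hq⟩ :=
    exists_budget_bounds_gt (fun i hi => (hB i hi).le) hS (mem_filter.1 hwK).2 hmax
  exact ⟨q, (hw_max 0 h0K).trans_lt hwq, hq⟩

end Budgets

/-- Ex post monopoly: for every finite nonempty advertiser set with positive values and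
budgets, and every supply `S > 0`, a market-clearing price exists. -/
theorem stmt_2 {ι : Type*} (I : Finset ι) (hI : I.Nonempty) (v B : ι → ℝ)
    (hv : ∀ i ∈ I, 0 < v i) (hB : ∀ i ∈ I, 0 < B i) (S : ℝ) (hS : 0 < S) :
    ∃ p : ℝ, IsClearingPrice I v B S p := by
  obtain ⟨p, hp, hAbove, hAtLeast⟩ := exists_budget_bounds hI hv hB hS
  exact ⟨p, .of_budget_bounds hp hAbove hAtLeast⟩
end

section
/- The market-clearing price is unique: if p > 0 and p' > 0 are both market-clearing prices for the same advertiser set I and the same supply S > 0, then p = p'. -/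
namespace IsClearingPrice

variable {ι : Type*} {I : Finset ι} {v B : ι → ℝ} {S p p' : ℝ}

theorem mul_le_sum_budget (hB : ∀ i ∈ I, 0 ≤ B i) (hp : IsClearingPrice I v B S p) :
    S * p ≤ ∑ i ∈ I with p ≤ v i, B i := by
  obtain ⟨hp0, α, hα, -, hα0, hS⟩ := hp
  rw [hS, ← Finset.sum_div, div_mul_cancel₀ _ hp0.ne', Finset.sum_filter]
  refine Finset.sum_le_sum fun i hi => ?_
  split_ifs with hvi
  · exact mul_le_of_le_one_left (hB i hi) (hα i hi).2
  · simp [hα0 i hi (not_le.1 hvi)]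

theorem sum_budget_le_mul (hB : ∀ i ∈ I, 0 ≤ B i) (hp : IsClearingPrice I v B S p) :
    ∑ i ∈ I with p < v i, B i ≤ S * p := by
  obtain ⟨hp0, α, hα, hα1, -, hS⟩ := hp
  rw [hS, ← Finset.sum_div, div_mul_cancel₀ _ hp0.ne', Finset.sum_filter]
  refine Finset.sum_le_sum fun i hi => ?_
  split_ifs with hvi
  · simp [hα1 i hi hvi]
  · exact mul_nonneg (hα i hi).1 (hB i hi)

theorem le_of_isClearingPrice (hS : 0 < S) (hB : ∀ i ∈ I, 0 ≤ B i)
    (hp : IsClearingPrice I v B S p) (hp' : IsClearingPrice I v B S p') : p' ≤ p := by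
  by_contra! hlt
  have : S * p' ≤ S * p :=
    calc S * p' ≤ ∑ i ∈ I with p' ≤ v i, B i := hp'.mul_le_sum_budget hB
      _ ≤ ∑ i ∈ I with p < v i, B i :=
          Finset.sum_le_sum_of_subset_of_nonneg
            (Finset.monotone_filter_right I fun _ _ => hlt.trans_le)
            fun i hi _ => hB i (Finset.mem_of_mem_filter i hi)
      _ ≤ S * p := hp.sum_budget_le_mul hB
  exact (mul_lt_mul_of_pos_left hlt hS).not_ge this

end IsClearingPrice

theorem stmt_3_general {ι : Type*} (I : Finset ι) (v B : ι → ℝ)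
    (hB : ∀ i ∈ I, 0 < B i) (S : ℝ) (hS : 0 < S)
    (p p' : ℝ) (hp : IsClearingPrice I v B S p) (hp' : IsClearingPrice I v B S p') :
    p = p' :=
  have hB₀ : ∀ i ∈ I, 0 ≤ B i := fun i hi => (hB i hi).le
  le_antisymm (hp'.le_of_isClearingPrice hS hB₀ hp) (hp.le_of_isClearingPrice hS hB₀ hp')

/-- Ex post monopoly: the market-clearing price is unique. -/
theorem stmt_3 {ι : Type*} (I : Finset ι) (v B : ι → ℝ)
    (hv : ∀ i ∈ I, 0 < v i) (hB : ∀ i ∈ I, 0 < B i) (S : ℝ) (hS : 0 < S)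
    (p p' : ℝ) (hp : IsClearingPrice I v B S p) (hp' : IsClearingPrice I v B S p') :
    p = p' :=
  stmt_3_general I v B hB S hS p p' hp hp'
end

section
/- Let advertisers 1,…,m be ordered so that v_1 ≤ … ≤ v_m, let p* > 0, and let j be an index with v_j ≥ p* and v_i < p* for all i < j. Assume Σ_{i=j+1}^m B_i/p* ≤ S ≤ Σ_{i=j}^m B_i/p*. Define the allocation q*_i = 0 for i < j, q*_i = B_i/p* for i > j, and q*_j = S − Σ_{i=j+1}^m B_i/p*. Then q* is feasible (q*_i ≥ 0, p*·q*_i ≤ B_i, Σ_i q*_i = S), and for every allocation q̂ with q̂_i ≥ 0, p*·q̂_i ≤ B_i, (v_i − p*)·q̂_i ≥ 0 for all i, and Σ_i q̂_i = S, the social welfare satisfies Σ_i v_i·q̂_i ≤ Σ_i v_i·q*_i. That is, q* solves the constrained social welfare maximization problem among all optimal (supply-exhausting) allocations at price p*. -/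
/-- Ex post monopoly, constrained social welfare maximization: with advertisers ordered
by value, `p* > 0`, and `j` the least index with `v j ≥ p*`, the allocation
`q* i = 0` for `i < j`, `q* i = B i / p*` for `i > j`, and
`q* j = S − ∑_{i > j} B i / p*` is feasible and maximizes the social welfare
`∑ i, v i * q i` among all feasible supply-exhausting allocations at price `p*`. -/
theorem stmt_5 (m : ℕ) (v B : Fin m → ℝ) (hv : ∀ i, 0 < v i) (hB : ∀ i, 0 < B i)
    (hsorted : Monotone v)
    (S pstar : ℝ) (hS : 0 < S) (hp : 0 < pstar)
    (j : Fin m) (hj : pstar ≤ v j) (hj' : ∀ i, i < j → v i < pstar)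
    (hlow : ∑ i ∈ Finset.univ.filter (fun i => j < i), B i / pstar ≤ S)
    (hhigh : S ≤ ∑ i ∈ Finset.univ.filter (fun i => j ≤ i), B i / pstar)
    (qstar : Fin m → ℝ)
    (hq : ∀ i, qstar i =
      if i < j then 0
      else if j < i then B i / pstar
      else S - ∑ k ∈ Finset.univ.filter (fun k => j < k), B k / pstar) :
    (∀ i, 0 ≤ qstar i) ∧ (∀ i, pstar * qstar i ≤ B i) ∧ (∑ i, qstar i = S) ∧
    ∀ qhat : Fin m → ℝ, (∀ i, 0 ≤ qhat i) → (∀ i, pstar * qhat i ≤ B i) →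
      (∀ i, 0 ≤ (v i - pstar) * qhat i) → (∑ i, qhat i = S) →
      ∑ i, v i * qhat i ≤ ∑ i, v i * qstar i := by
  have hfilter : Finset.univ.filter (fun k => j ≤ k)
      = insert j (Finset.univ.filter (fun k : Fin m => j < k)) := by
    ext k
    simp only [Finset.mem_filter, Finset.mem_univ, true_and, Finset.mem_insert]
    constructor
    · intro h
      rcases h.lt_or_eq with h' | h'
      · exact Or.inr h'
      · exact Or.inl h'.symm
    · rintro (rfl | h)
      · exact le_refl _
      · exact h.le
  have hsplit : ∑ k ∈ Finset.univ.filter (fun k => j ≤ k), B k / pstar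
      = B j / pstar + ∑ k ∈ Finset.univ.filter (fun k => j < k), B k / pstar := by
    rw [hfilter, Finset.sum_insert (by simp)]
  have hq0 : ∀ i, 0 ≤ qstar i := by
    intro i
    rw [hq i]
    split_ifs with h1 h2
    · exact le_refl _
    · exact div_nonneg (hB i).le hp.le
    · linarith
  have hqB : ∀ i, pstar * qstar i ≤ B i := by
    intro i
    rw [hq i]
    split_ifs with h1 h2
    · simpa using (hB i).le
    · rw [mul_div_cancel₀ _ hp.ne']
    · have hij : i = j := le_antisymm (not_lt.1 h2) (not_lt.1 h1)
      rw [hij]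
      rw [hsplit] at hhigh
      have hle : S - ∑ k ∈ Finset.univ.filter (fun k => j < k), B k / pstar ≤ B j / pstar := by
        linarith
      calc pstar * (S - ∑ k ∈ Finset.univ.filter (fun k => j < k), B k / pstar)
          ≤ pstar * (B j / pstar) := mul_le_mul_of_nonneg_left hle hp.le
        _ = B j := mul_div_cancel₀ _ hp.ne'
  have hsum : ∑ i, qstar i = S := by
    rw [← Finset.sum_filter_add_sum_filter_not Finset.univ (fun i => i < j) qstar]
    have e1 : ∑ i ∈ Finset.univ.filter (fun i => i < j), qstar i = 0 := by
      apply Finset.sum_eq_zero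
      intro i hi
      simp only [Finset.mem_filter] at hi
      rw [hq i, if_pos hi.2]
    have e2 : (Finset.univ.filter (fun i : Fin m => ¬ i < j))
        = insert j (Finset.univ.filter (fun k : Fin m => j < k)) := by
      rw [← hfilter]
      simp [not_lt]
    have e3 : ∑ i ∈ Finset.univ.filter (fun i => ¬ i < j), qstar i = S := by
      rw [e2, Finset.sum_insert (by simp)]
      have : ∑ i ∈ Finset.univ.filter (fun k : Fin m => j < k), qstar i
          = ∑ i ∈ Finset.univ.filter (fun k : Fin m => j < k), B i / pstar := by
        apply Finset.sum_congr rfl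
        intro i hi
        simp only [Finset.mem_filter] at hi
        rw [hq i, if_neg (by exact not_lt.2 hi.2.le), if_pos hi.2]
      rw [this, hq j, if_neg (lt_irrefl _), if_neg (lt_irrefl _)]
      ring
    rw [e1, e3, zero_add]
  refine ⟨hq0, hqB, hsum, ?_⟩
  intro qhat h1 h2 h3 h4
  have hzero : ∀ i, i < j → qhat i = 0 := by
    intro i hi
    by_contra h
    have hq' : 0 < qhat i := lt_of_le_of_ne (h1 i) (Ne.symm h)
    have := h3 i
    nlinarith [hj' i hi]
  have key : ∀ i, 0 ≤ (v i - v j) * (qstar i - qhat i) := by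
    intro i
    rcases lt_trichotomy i j with h | h | h
    · rw [hzero i h, hq i, if_pos h]; simp
    · subst h; simp
    · have hv' : v j ≤ v i := hsorted h.le
      have hle : qhat i ≤ qstar i := by
        rw [hq i, if_neg (not_lt.2 h.le), if_pos h, le_div_iff₀ hp]
        have := h2 i
        linarith
      nlinarith
  have hnn : 0 ≤ ∑ i, (v i - v j) * (qstar i - qhat i) :=
    Finset.sum_nonneg fun i _ => key i
  have expand : ∑ i, (v i - v j) * (qstar i - qhat i)
      = (∑ i, v i * qstar i) - (∑ i, v i * qhat i)
        - v j * (∑ i, qstar i) + v j * (∑ i, qhat i) := by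
    simp only [sub_mul, mul_sub, Finset.sum_sub_distrib, Finset.mul_sum]
    ring
  rw [expand, hsum, h4] at hnn
  linarith
end

section
/- The market-clearing price is non-decreasing in the set of participating advertisers: for a fixed supply S > 0, if I_1 ⊆ I_2 are finite advertiser sets and p_1, p_2 > 0 are market-clearing prices for (I_1, S) and (I_2, S) respectively, then p_1 ≤ p_2. -/
/-- The market-clearing price is non-decreasing over the set of participating
advertisers, given a fixed supply `S > 0`. -/
theorem stmt_6 {ι : Type*} (I₁ I₂ : Finset ι) (hsub : I₁ ⊆ I₂) (v B : ι → ℝ)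
    (hv : ∀ i ∈ I₂, 0 < v i) (hB : ∀ i ∈ I₂, 0 < B i) (S : ℝ) (hS : 0 < S)
    (p₁ p₂ : ℝ) (hp₁ : IsClearingPrice I₁ v B S p₁) (hp₂ : IsClearingPrice I₂ v B S p₂) :
    p₁ ≤ p₂ := by
  by_contra h
  push_neg at h
  obtain ⟨hP₁, α₁, hα₁01, hα₁hi, hα₁lo, hS₁⟩ := hp₁
  obtain ⟨hP₂, α₂, hα₂01, hα₂hi, hα₂lo, hS₂⟩ := hp₂
  classical
  set T := I₁.filter (fun i => p₁ ≤ v i) with hT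
  have hTsub₁ : T ⊆ I₁ := Finset.filter_subset _ _
  have hTsub₂ : T ⊆ I₂ := hTsub₁.trans hsub
  -- sum over I₁ equals sum over T
  have hsumT : S = ∑ i ∈ T, α₁ i * B i / p₁ := by
    rw [hS₁]
    refine (Finset.sum_subset hTsub₁ ?_).symm
    intro i hi hni
    have hvi : v i < p₁ := by
      by_contra hvi'
      exact hni (Finset.mem_filter.mpr ⟨hi, not_lt.mp hvi'⟩)
    rw [hα₁lo i hi hvi]
    simp
  have hTne : T.Nonempty := by
    by_contra hTe
    rw [Finset.not_nonempty_iff_eq_empty] at hTe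
    rw [hTe, Finset.sum_empty] at hsumT
    linarith
  have h1 : S ≤ ∑ i ∈ T, B i / p₁ := by
    rw [hsumT]
    refine Finset.sum_le_sum fun i hi => ?_
    have hBi := hB i (hTsub₂ hi)
    have h01 := hα₁01 i (hTsub₁ hi)
    obtain ⟨ha, hb⟩ := h01
    gcongr
    nlinarith
  have h2 : ∑ i ∈ T, B i / p₁ < ∑ i ∈ T, B i / p₂ := by
    refine Finset.sum_lt_sum_of_nonempty hTne fun i hi => ?_
    exact div_lt_div_of_pos_left (hB i (hTsub₂ hi)) hP₂ h
  have h3 : ∑ i ∈ T, B i / p₂ ≤ ∑ i ∈ I₂, α₂ i * B i / p₂ := by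
    calc ∑ i ∈ T, B i / p₂ = ∑ i ∈ T, α₂ i * B i / p₂ := by
          refine Finset.sum_congr rfl fun i hi => ?_
          have hvi : p₂ < v i := lt_of_lt_of_le h (Finset.mem_filter.mp hi).2
          rw [hα₂hi i (hTsub₂ hi) hvi, one_mul]
      _ ≤ ∑ i ∈ I₂, α₂ i * B i / p₂ := by
          refine Finset.sum_le_sum_of_subset_of_nonneg hTsub₂ fun i hi _ => ?_
          have h01 := hα₂01 i hi
          have hBi := hB i hi
          exact div_nonneg (mul_nonneg h01.1 hBi.le) hP₂.le
  rw [← hS₂] at h3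
  linarith
end

section
/- The search engine's revenue is non-decreasing in the set of participating advertisers: for a fixed supply S > 0, if I_1 ⊆ I_2 are finite advertiser sets with market-clearing prices p_1, p_2 > 0 for (I_1, S) and (I_2, S), then the revenues satisfy R(I_1) = p_1·S ≤ p_2·S = R(I_2). -/
/-- The search engine's revenue `R(I) = p·S` is non-decreasing over the set of
participating advertisers, given a fixed supply `S > 0`. -/
theorem stmt_7 {ι : Type*} (I₁ I₂ : Finset ι) (hsub : I₁ ⊆ I₂) (v B : ι → ℝ)
    (hv : ∀ i ∈ I₂, 0 < v i) (hB : ∀ i ∈ I₂, 0 < B i) (S : ℝ) (hS : 0 < S)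
    (p₁ p₂ : ℝ) (hp₁ : IsClearingPrice I₁ v B S p₁) (hp₂ : IsClearingPrice I₂ v B S p₂) :
    p₁ * S ≤ p₂ * S := by
  obtain ⟨hq₁, α₁, ha₁, hi₁, hz₁, hs₁⟩ := hp₁
  obtain ⟨hq₂, α₂, ha₂, hi₂, hz₂, hs₂⟩ := hp₂
  by_contra hcon
  push_neg at hcon
  have hplt : p₂ < p₁ := by
    by_contra h
    push_neg at h
    exact absurd (mul_le_mul_of_nonneg_right h hS.le) (not_le.mpr hcon)
  have key₁ : p₁ * S = ∑ i ∈ I₁, α₁ i * B i := by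
    rw [hs₁, Finset.mul_sum]
    exact Finset.sum_congr rfl fun i _ => mul_div_cancel₀ _ hq₁.ne'
  have key₂ : p₂ * S = ∑ i ∈ I₂, α₂ i * B i := by
    rw [hs₂, Finset.mul_sum]
    exact Finset.sum_congr rfl fun i _ => mul_div_cancel₀ _ hq₂.ne'
  have step1 : ∑ i ∈ I₁, α₁ i * B i ≤ ∑ i ∈ I₁, α₂ i * B i := by
    refine Finset.sum_le_sum fun i hi => ?_
    have hBi := hB i (hsub hi)
    rcases lt_or_ge p₂ (v i) with h | h
    · rw [hi₂ i (hsub hi) h]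
      exact mul_le_mul_of_nonneg_right (ha₁ i hi).2 hBi.le
    · rw [hz₁ i hi (lt_of_le_of_lt h hplt)]
      simpa using mul_nonneg (ha₂ i (hsub hi)).1 hBi.le
  have step2 : ∑ i ∈ I₁, α₂ i * B i ≤ ∑ i ∈ I₂, α₂ i * B i :=
    Finset.sum_le_sum_of_subset_of_nonneg hsub fun i hi _ =>
      mul_nonneg (ha₂ i hi).1 (hB i hi).le
  have : p₁ * S ≤ p₂ * S := by rw [key₁, key₂]; exact step1.trans step2
  exact absurd this (not_le.mpr hcon)
end

section
/- The market-clearing price is non-increasing in the supply: for a fixed finite advertiser set I, if S_1 > S_2 > 0 and p_1, p_2 > 0 are market-clearing prices for (I, S_1) and (I, S_2) respectively, then p_1 ≤ p_2. -/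
/-- Either the advertiser spends its whole budget at the lower price `q`, or its value is
below `p` and it buys nothing at `p`. -/
lemma clearing_demand_le_of_lt {a a' b v p q : ℝ} (hb : 0 ≤ b) (hq : 0 < q) (hqp : q < p)
    (ha : a ≤ 1) (ha_zero : v < p → a = 0) (ha' : 0 ≤ a') (ha'_one : q < v → a' = 1) :
    a * b / p ≤ a' * b / q := by
  rcases lt_or_ge q v with hqv | hvq
  · rw [ha'_one hqv, one_mul]
    calc a * b / p ≤ b / p :=
          div_le_div_of_nonneg_right (mul_le_of_le_one_left hb ha) (hq.trans hqp).le
      _ ≤ b / q := by gcongr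
  · rw [ha_zero (hvq.trans_lt hqp), zero_mul, zero_div]
    positivity

theorem IsClearingPrice.supply_le_of_lt {ι : Type*} {I : Finset ι} {v B : ι → ℝ}
    {S S' p q : ℝ}
    (hB : ∀ i ∈ I, 0 ≤ B i) (hp : IsClearingPrice I v B S p) (hq : IsClearingPrice I v B S' q)
    (hqp : q < p) : S ≤ S' := by
  obtain ⟨-, α, hα, -, hα_zero, rfl⟩ := hp
  obtain ⟨hq_pos, α', hα', hα'_one, -, rfl⟩ := hq
  exact Finset.sum_le_sum fun i hi => clearing_demand_le_of_lt (hB i hi) hq_pos hqp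
    (hα i hi).2 (hα_zero i hi) (hα' i hi).1 (hα'_one i hi)

theorem stmt_8_general {ι : Type*} (I : Finset ι) (v B : ι → ℝ)
    (hB : ∀ i ∈ I, 0 < B i)
    (S₁ S₂ : ℝ) (hS : S₂ < S₁)
    (p₁ p₂ : ℝ) (hp₁ : IsClearingPrice I v B S₁ p₁) (hp₂ : IsClearingPrice I v B S₂ p₂) :
    p₁ ≤ p₂ :=
  le_of_not_gt fun h => hS.not_ge (hp₁.supply_le_of_lt (fun i hi => (hB i hi).le) hp₂ h)

/-- The market-clearing price is non-increasing over the supply, given a fixed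
advertiser set `I`. -/
theorem stmt_8 {ι : Type*} (I : Finset ι) (v B : ι → ℝ)
    (hv : ∀ i ∈ I, 0 < v i) (hB : ∀ i ∈ I, 0 < B i)
    (S₁ S₂ : ℝ) (hS₂ : 0 < S₂) (hS : S₂ < S₁)
    (p₁ p₂ : ℝ) (hp₁ : IsClearingPrice I v B S₁ p₁) (hp₂ : IsClearingPrice I v B S₂ p₂) :
    p₁ ≤ p₂ :=
  stmt_8_general I v B hB S₁ S₂ hS p₁ p₂ hp₁ hp₂
end

section
/- The search engine's revenue is non-decreasing in the supply: for a fixed finite advertiser set I, if S_1 > S_2 > 0 and p_1, p_2 > 0 are market-clearing prices for (I, S_1) and (I, S_2) respectively, then the revenues satisfy R(S_1) = p_1·S_1 ≥ p_2·S_2 = R(S_2). -/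
/-- The search engine's revenue `R(S) = p·S` is non-decreasing over the supply,
given a fixed advertiser set `I`. -/
theorem stmt_9 {ι : Type*} (I : Finset ι) (v B : ι → ℝ)
    (hv : ∀ i ∈ I, 0 < v i) (hB : ∀ i ∈ I, 0 < B i)
    (S₁ S₂ : ℝ) (hS₂ : 0 < S₂) (hS : S₂ < S₁)
    (p₁ p₂ : ℝ) (hp₁ : IsClearingPrice I v B S₁ p₁) (hp₂ : IsClearingPrice I v B S₂ p₂) :
    p₂ * S₂ ≤ p₁ * S₁ := by
  obtain ⟨hp₁pos, α₁, hα₁b, hα₁1, hα₁0, hS₁eq⟩ := hp₁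
  obtain ⟨hp₂pos, α₂, hα₂b, hα₂1, hα₂0, hS₂eq⟩ := hp₂
  rcases le_or_gt p₂ p₁ with h | h
  · exact mul_le_mul h hS.le hS₂.le hp₁pos.le
  · -- p₁ < p₂ : revenue = Σ α i * B i, compare pointwise
    have hr₁ : p₁ * S₁ = ∑ i ∈ I, α₁ i * B i := by
      rw [hS₁eq, Finset.mul_sum]
      exact Finset.sum_congr rfl fun i _ => by field_simp
    have hr₂ : p₂ * S₂ = ∑ i ∈ I, α₂ i * B i := by
      rw [hS₂eq, Finset.mul_sum]
      exact Finset.sum_congr rfl fun i _ => by field_simp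
    rw [hr₁, hr₂]
    apply Finset.sum_le_sum
    intro i hi
    have hBi := hB i hi
    rcases lt_or_ge p₁ (v i) with hv1 | hv1
    · rw [hα₁1 i hi hv1]
      exact mul_le_mul_of_nonneg_right (hα₂b i hi).2 hBi.le
    · rw [hα₂0 i hi (lt_of_le_of_lt hv1 h)]
      have := (hα₁b i hi).1
      nlinarith
end

section
/- Let q > 0, ζ ∈ [0,1] and x_2 ∈ (0,1), and define ξ_1 = ((1−ζ)q + x_2²)/(2x_2) and ξ_2 = (1 − x_2² − (1−ζ)q)/(2(1−x_2)). Then ξ_1 and ξ_2 are the indifferent users' locations, i.e., q − ξ_1² = ζq − (ξ_1 − x_2)² and q − (1−ξ_2)² = ζq − (ξ_2 − x_2)², and the market share of search engine 2 equals n_2(x_2) = ξ_2 − ξ_1 = (1/2)·(1 − (1−ζ)q/(x_2(1−x_2))). -/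
/-- Hotelling competition on the unit circle: with engine 1 at `0`, engine 2 at
`x₂ ∈ (0,1)`, user payoff `q > 0` and relative quality `ζ ∈ [0,1]`, the points
`ξ₁ = ((1−ζ)q + x₂²)/(2x₂)` and `ξ₂ = (1 − x₂² − (1−ζ)q)/(2(1−x₂))` are the
indifferent users' locations, and engine 2's market share is
`ξ₂ − ξ₁ = (1/2)(1 − (1−ζ)q/(x₂(1−x₂)))`. -/
theorem stmt_10 (q ζ x₂ : ℝ) (hq : 0 < q) (hζ₀ : 0 ≤ ζ) (hζ₁ : ζ ≤ 1)
    (hx₀ : 0 < x₂) (hx₁ : x₂ < 1)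
    (ξ₁ ξ₂ : ℝ)
    (h₁ : ξ₁ = ((1 - ζ) * q + x₂ ^ 2) / (2 * x₂))
    (h₂ : ξ₂ = (1 - x₂ ^ 2 - (1 - ζ) * q) / (2 * (1 - x₂))) :
    q - ξ₁ ^ 2 = ζ * q - (ξ₁ - x₂) ^ 2 ∧
    q - (1 - ξ₂) ^ 2 = ζ * q - (ξ₂ - x₂) ^ 2 ∧
    ξ₂ - ξ₁ = (1 / 2) * (1 - (1 - ζ) * q / (x₂ * (1 - x₂))) := by
  have hx : x₂ ≠ 0 := ne_of_gt hx₀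
  have hx' : (1 : ℝ) - x₂ ≠ 0 := by linarith
  subst h₁ h₂
  refine ⟨by field_simp; ring, by field_simp; ring, by field_simp; ring⟩
end

section
/- Non-zero Nash equilibrium price pairs may fail to exist: if there is exactly one advertiser, with value v > 0, budget B > 0 and discount factor ρ ∈ (0,1), and supplies S_1, S_2 > 0, then there is no Nash equilibrium price pair (p_1, p_2) with p_1 > 0. -/
/-- `p` is the market-clearing price for advertiser set `I` with (effective) values `w`,
budgets `B` and supply `S`; by convention the clearing price of the empty set is `0`. -/
def ClearingD {ι : Type*} (I : Finset ι) (w B : ι → ℝ) (S p : ℝ) : Prop :=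
  (I = ∅ ∧ p = 0) ∨
  (I.Nonempty ∧ 0 < p ∧ ∃ α : ι → ℝ, (∀ i ∈ I, 0 ≤ α i ∧ α i ≤ 1) ∧
    (∀ i ∈ I, p < w i → α i = 1) ∧ (∀ i ∈ I, w i < p → α i = 0) ∧
    S = ∑ i ∈ I, α i * B i / p)

open Classical in
/-- `(p₁, p₂)` (with `p₁ > 0`, `p₂ ≥ 0`) is a Nash equilibrium price pair: `p₁` is the
market-clearing price for `I₁⁺(p₁,p₂) = {i : ρ i ≤ p₂/p₁ ∧ v i ≥ p₁}` with supply `S₁`,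
and `p₂` is the market-clearing price for
`I₂⁺(p₁,p₂) = {i : ρ i > p₂/p₁ ∧ ρ i · v i ≥ p₂}` (with discounted values) and supply `S₂`. -/
def NEPair {ι : Type*} (I : Finset ι) (v B ρ : ι → ℝ) (S₁ S₂ p₁ p₂ : ℝ) : Prop :=
  0 < p₁ ∧ 0 ≤ p₂ ∧
  ClearingD (I.filter (fun i => ρ i ≤ p₂ / p₁ ∧ p₁ ≤ v i)) v B S₁ p₁ ∧
  ClearingD (I.filter (fun i => p₂ / p₁ < ρ i ∧ p₂ ≤ ρ i * v i)) (fun i => ρ i * v i) B S₂ p₂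

/-- Non-zero Nash equilibrium price pairs may fail to exist: with exactly one advertiser
(value `v > 0`, budget `B > 0`, discount factor `ρ ∈ (0,1)`) there is no Nash
equilibrium price pair. -/
theorem stmt_12 {ι : Type*} (i₀ : ι) (v B ρ : ι → ℝ)
    (hv : 0 < v i₀) (hB : 0 < B i₀) (hρ₀ : 0 < ρ i₀) (hρ₁ : ρ i₀ < 1)
    (S₁ S₂ : ℝ) (hS₁ : 0 < S₁) (hS₂ : 0 < S₂) :
    ¬ ∃ p₁ p₂ : ℝ, NEPair ({i₀} : Finset ι) v B ρ S₁ S₂ p₁ p₂ := by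
  rintro ⟨p₁, p₂, hp₁, hp₂, h1, h2⟩
  by_cases h : ρ i₀ ≤ p₂ / p₁
  · have hC : ({i₀} : Finset ι).filter (fun i => p₂ / p₁ < ρ i ∧ p₂ ≤ ρ i * v i) = ∅ := by
      rw [Finset.filter_eq_empty_iff]
      intro i hi
      rw [Finset.mem_singleton] at hi
      subst hi
      exact fun hc => absurd h (not_le.mpr hc.1)
    rcases h2 with ⟨_, hp20⟩ | ⟨hne, _⟩
    · rw [hp20, zero_div] at h
      exact absurd h (not_le.mpr hρ₀)
    · rw [hC] at hne
      exact Finset.not_nonempty_empty hne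
  · have hA : ({i₀} : Finset ι).filter (fun i => ρ i ≤ p₂ / p₁ ∧ p₁ ≤ v i) = ∅ := by
      rw [Finset.filter_eq_empty_iff]
      intro i hi
      rw [Finset.mem_singleton] at hi
      subst hi
      exact fun hc => h hc.1
    rcases h1 with ⟨_, hp10⟩ | ⟨hne, _⟩
    · exact absurd hp10 (ne_of_gt hp₁)
    · rw [hA] at hne
      exact Finset.not_nonempty_empty hne
end

section
/- If a Nash equilibrium price pair (p_1, p_2) with p_1 > 0 exists, then p_1 ≥ p_2. -/
/-- If a Nash equilibrium price pair `(p₁, p₂)` with `p₁ > 0` exists, then `p₁ ≥ p₂`. -/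
theorem stmt_13 {ι : Type*} (I : Finset ι) (v B ρ : ι → ℝ)
    (hv : ∀ i ∈ I, 0 < v i) (hB : ∀ i ∈ I, 0 < B i)
    (hρ : ∀ i ∈ I, 0 ≤ ρ i ∧ ρ i ≤ 1)
    (S₁ S₂ : ℝ) (hS₁ : 0 < S₁) (hS₂ : 0 < S₂)
    (p₁ p₂ : ℝ) (hNE : NEPair I v B ρ S₁ S₂ p₁ p₂) :
    p₂ ≤ p₁ := by
  obtain ⟨hp₁, hp₂, _, hC₂⟩ := hNE
  by_contra hlt
  push_neg at hlt
  have hratio : 1 < p₂ / p₁ := (one_lt_div hp₁).mpr hlt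
  have hempty : I.filter (fun i => p₂ / p₁ < ρ i ∧ p₂ ≤ ρ i * v i) = ∅ := by
    apply Finset.filter_false_of_mem
    intro i hi h
    exact absurd (hratio.trans h.1) (not_lt.mpr (hρ i hi).2)
  rcases hC₂ with ⟨_, h0⟩ | ⟨hne, _⟩
  · exact absurd (h0 ▸ hlt) (not_lt.mpr hp₁.le)
  · rw [hempty] at hne
    exact Finset.not_nonempty_empty hne
end

section
/- In the stable state, search engine 2 cannot make a higher revenue than engine 1: if (p_1, p_2) is a Nash equilibrium price pair with p_1 > 0 and the supplies satisfy S_1 ≥ S_2 > 0, then the revenues satisfy R_1 = p_1·S_1 ≥ p_2·S_2 = R_2. -/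
/-- In the stable state, search engine 2 cannot make a higher revenue than engine 1:
at a Nash equilibrium price pair with `S₁ ≥ S₂ > 0`, `R₁ = p₁·S₁ ≥ p₂·S₂ = R₂`. -/
theorem stmt_14 {ι : Type*} (I : Finset ι) (v B ρ : ι → ℝ)
    (hv : ∀ i ∈ I, 0 < v i) (hB : ∀ i ∈ I, 0 < B i)
    (hρ : ∀ i ∈ I, 0 ≤ ρ i ∧ ρ i ≤ 1)
    (S₁ S₂ : ℝ) (hS₂ : 0 < S₂) (hS : S₂ ≤ S₁)
    (p₁ p₂ : ℝ) (hNE : NEPair I v B ρ S₁ S₂ p₁ p₂) :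
    p₂ * S₂ ≤ p₁ * S₁ := by
  obtain ⟨hp₁, hp₂, hC₁, hC₂⟩ := hNE
  have hle : p₂ ≤ p₁ := by
    by_contra h
    push_neg at h
    have hdiv : 1 < p₂ / p₁ := (one_lt_div hp₁).mpr h
    have hempty : I.filter (fun i => p₂ / p₁ < ρ i ∧ p₂ ≤ ρ i * v i) = ∅ := by
      apply Finset.filter_eq_empty_iff.mpr
      intro i hi hcond
      exact absurd ((hρ i hi).2) (not_le.mpr (lt_trans hdiv hcond.1))
    rcases hC₂ with ⟨_, hzero⟩ | ⟨hne, _⟩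
    · exact absurd hzero (by linarith)
    · rw [hempty] at hne
      exact absurd hne (by simp)
  calc p₂ * S₂ ≤ p₁ * S₂ := by nlinarith
    _ ≤ p₁ * S₁ := by nlinarith
end

section
/- Fix a finite advertiser set I with values v_i > 0, fix the budgets of all advertisers except one distinguished advertiser i_0 ∈ I, and fix the supply S > 0. For b ∈ [0,∞), let p*(b) denote the market-clearing price when advertiser i_0 has budget b (well-defined by existence and uniqueness of the clearing price). Then the function b ↦ p*(b) is continuous and non-decreasing on [0,∞). -/
open Classical in
lemma clearing_bounds {ι : Type*} (I : Finset ι) (v W : ι → ℝ) (S p : ℝ)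
    (hW : ∀ i ∈ I, 0 ≤ W i) (h : IsClearingPrice I v W S p) :
    (∑ i ∈ I.filter (fun i => p < v i), W i) ≤ S * p ∧
    S * p ≤ ∑ i ∈ I.filter (fun i => p ≤ v i), W i := by
  obtain ⟨hp, α, hα01, hα1, hα0, hSeq⟩ := h
  have hSp : S * p = ∑ i ∈ I, α i * W i := by
    rw [hSeq, ← Finset.sum_div, div_mul_cancel₀]
    exact ne_of_gt hp
  constructor
  · rw [hSp, Finset.sum_filter]
    apply Finset.sum_le_sum
    intro i hi
    by_cases h' : p < v i
    · rw [if_pos h', hα1 i hi h', one_mul]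
    · rw [if_neg h']
      exact mul_nonneg (hα01 i hi).1 (hW i hi)
  · rw [hSp, Finset.sum_filter]
    apply Finset.sum_le_sum
    intro i hi
    by_cases h' : p ≤ v i
    · rw [if_pos h']
      exact mul_le_of_le_one_left (hW i hi) (hα01 i hi).2
    · push_neg at h'
      rw [if_neg (not_le.mpr h'), hα0 i hi h', zero_mul]

/-- Fixing the advertiser set `I`, supply `S > 0`, and all budgets except that of a
distinguished advertiser `i₀ ∈ I`, the market-clearing price `p*(b)` (where `b ≥ 0` is
the budget of `i₀`) is a continuous and non-decreasing function of `b` on `[0, ∞)`. -/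
theorem stmt_15 {ι : Type*} [DecidableEq ι] (I : Finset ι) (i₀ : ι) (hi₀ : i₀ ∈ I)
    (v B : ι → ℝ) (hv : ∀ i ∈ I, 0 < v i) (hB : ∀ i ∈ I, 0 ≤ B i)
    (hBpos : 0 < ∑ i ∈ I.erase i₀, B i)
    (S : ℝ) (hS : 0 < S)
    (pstar : ℝ → ℝ)
    (hclear : ∀ b : ℝ, 0 ≤ b → IsClearingPrice I v (Function.update B i₀ b) S (pstar b)) :
    ContinuousOn pstar (Set.Ici 0) ∧ MonotoneOn pstar (Set.Ici 0) := by
  classical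
  set W : ℝ → ι → ℝ := fun b => Function.update B i₀ b with hWdef
  have hWnn : ∀ b, 0 ≤ b → ∀ i ∈ I, 0 ≤ W b i := by
    intro b hb i hi
    simp only [hWdef, Function.update_apply]
    split
    · exact hb
    · exact hB i hi
  have hWmono : ∀ b b', b ≤ b' → ∀ i, W b i ≤ W b' i := by
    intro b b' hbb' i
    simp only [hWdef, Function.update_apply]
    split
    · exact hbb'
    · exact le_refl _
  -- monotonicity
  have mono : MonotoneOn pstar (Set.Ici 0) := by
    intro b hb b' hb' hbb'
    simp only [Set.mem_Ici] at hb hb'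
    by_contra hcon
    push_neg at hcon
    set p := pstar b
    set p' := pstar b'
    obtain ⟨h1, h2⟩ := clearing_bounds I v (W b) S p (hWnn b hb) (hclear b hb)
    obtain ⟨h1', h2'⟩ := clearing_bounds I v (W b') S p' (hWnn b' hb') (hclear b' hb')
    have chain : S * p ≤ S * p' := by
      calc S * p ≤ ∑ i ∈ I.filter (fun i => p ≤ v i), W b i := h2
        _ ≤ ∑ i ∈ I.filter (fun i => p' < v i), W b i := by
            apply Finset.sum_le_sum_of_subset_of_nonneg
            · intro i hi
              rw [Finset.mem_filter] at hi ⊢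
              exact ⟨hi.1, lt_of_lt_of_le hcon hi.2⟩
            · intro i hi _
              exact hWnn b hb i (Finset.mem_filter.mp hi).1
        _ ≤ ∑ i ∈ I.filter (fun i => p' < v i), W b' i :=
            Finset.sum_le_sum fun i _ => hWmono b b' hbb' i
        _ ≤ S * p' := h1'
    have : S * p' < S * p := by
      exact mul_lt_mul_of_pos_left hcon hS
    linarith
  refine ⟨?_, mono⟩
  -- Lipschitz bound : for 0 ≤ b ≤ b', S * pstar b' ≤ S * pstar b + (b' - b)
  have key : ∀ b b', 0 ≤ b → b ≤ b' → S * pstar b' ≤ S * pstar b + (b' - b) := by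
    intro b b' hb hbb'
    have hb' : (0:ℝ) ≤ b' := le_trans hb hbb'
    set p := pstar b
    set p' := pstar b'
    rcases le_or_gt p' p with h | h
    · nlinarith
    obtain ⟨h1, h2⟩ := clearing_bounds I v (W b) S p (hWnn b hb) (hclear b hb)
    obtain ⟨h1', h2'⟩ := clearing_bounds I v (W b') S p' (hWnn b' hb') (hclear b' hb')
    calc S * p' ≤ ∑ i ∈ I.filter (fun i => p' ≤ v i), W b' i := h2'
      _ ≤ (∑ i ∈ I.filter (fun i => p' ≤ v i), W b i) + (b' - b) := by
          have : ∑ i ∈ I.filter (fun i => p' ≤ v i), (W b' i - W b i) ≤ b' - b := by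
            have heq : ∀ i, W b' i - W b i = if i = i₀ then b' - b else 0 := by
              intro i
              simp only [hWdef, Function.update_apply]
              split <;> simp
            calc ∑ i ∈ I.filter (fun i => p' ≤ v i), (W b' i - W b i)
                = ∑ i ∈ I.filter (fun i => p' ≤ v i), (if i = i₀ then b' - b else 0) := by
                  exact Finset.sum_congr rfl fun i _ => heq i
              _ ≤ b' - b := by
                  rw [Finset.sum_ite_eq' _ i₀ (fun _ => b' - b)]
                  split
                  · exact le_refl _
                  · linarith
          have := Finset.sum_sub_distrib (s := I.filter (fun i => p' ≤ v i))
            (f := W b') (g := W b)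
          linarith [this ▸ ‹∑ i ∈ I.filter (fun i => p' ≤ v i), (W b' i - W b i) ≤ b' - b›]
      _ ≤ (∑ i ∈ I.filter (fun i => p < v i), W b i) + (b' - b) := by
          have hsub : I.filter (fun i => p' ≤ v i) ⊆ I.filter (fun i => p < v i) := by
            intro i hi
            rw [Finset.mem_filter] at hi ⊢
            exact ⟨hi.1, lt_of_lt_of_le h hi.2⟩
          have := Finset.sum_le_sum_of_subset_of_nonneg hsub
            (fun i hi _ => hWnn b hb i (Finset.mem_filter.mp hi).1)
          linarith
      _ ≤ S * p + (b' - b) := by linarith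
  -- continuity via Lipschitz
  have lip : LipschitzOnWith (Real.toNNReal S⁻¹) pstar (Set.Ici 0) := by
    apply LipschitzOnWith.of_dist_le_mul
    intro x hx y hy
    simp only [Set.mem_Ici] at hx hy
    rw [Real.dist_eq, Real.dist_eq]
    have hc : (Real.toNNReal S⁻¹ : ℝ) = S⁻¹ := Real.coe_toNNReal _ (by positivity)
    rw [hc]
    have habs : ∀ a c, 0 ≤ a → a ≤ c → |pstar c - pstar a| ≤ S⁻¹ * |c - a| := by
      intro a c ha hac
      have h1 := key a c ha hac
      have h2 := mono (Set.mem_Ici.mpr ha) (Set.mem_Ici.mpr (le_trans ha hac)) hac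
      rw [abs_of_nonneg (by linarith), abs_of_nonneg (by linarith)]
      rw [inv_mul_eq_div, le_div_iff₀ hS]
      nlinarith
    rcases le_total x y with hxy | hxy
    · rw [abs_sub_comm (pstar x) (pstar y), abs_sub_comm x y]
      exact habs x y hx hxy
    · exact habs y x hy hxy
  exact lip.continuousOn
end
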